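/- For every ε > 0 and every z ∈ ℂ∖{0} there exist δ > 0 and N ∈ ℕ such that for all n ≥ N, the number of indices j with 0 ≤ j ≤ n and (n^j/j!)^{1/2} |z|^j > e^{n(V(z) − ε)} is at least δ n, where V(z) = |z|²/2 for |z| ≤ 1 and V(z) = log|z| + 1/2 for |z| > 1. -/

import Mathlib

open Filter
open scoped Classical

/-- The weighted extremal function `V_Q` of the weight `Q(z) = |z|²/2`:
`V(z) = |z|²/2` for `|z| ≤ 1` and `V(z) = log|z| + 1/2` for `|z| > 1`. -/
noncomputable def weylV (z : ℂ) : ℝ :=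
  if ‖z‖ ≤ 1 then ‖z‖ ^ 2 / 2 else Real.log (‖z‖) + 1 / 2


/-!
Write `j = t n`. By Stirling, `log ((n^j / j!)^{1/2} r^j) ≥ n G(t) - O(log n)` with
`G(t) = t (1 - log t) / 2 + t log r`, and `G (min (r²) 1) = V(z)` for `r = |z|`. By continuity
`G > V(z) - ε/2` on an interval `[a, min (r²) 1]` with `a > 0`, and that interval contains
about `(min (r²) 1 - a) n` of the points `j / n`.
-/

open Real Finset

noncomputable def weylRate (r t : ℝ) : ℝ := t * (1 - log t) / 2 + t * log r

theorem weylRate_min_sq_one {z : ℂ} (hz : z ≠ 0) :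
    weylRate ‖z‖ (min (‖z‖ ^ 2) 1) = weylV z := by
  have hr : 0 < ‖z‖ := norm_pos_iff.mpr hz
  unfold weylRate weylV
  split_ifs with h
  · rw [min_eq_left (pow_le_one₀ hr.le h), log_pow]
    push_cast
    ring
  · rw [min_eq_right (one_le_pow₀ (not_le.mp h).le), log_one]
    ring

theorem continuousAt_weylRate (r : ℝ) {t : ℝ} (ht : t ≠ 0) : ContinuousAt (weylRate r) t := by
  unfold weylRate
  fun_prop (disch := assumption)

-- The Stirling sequence `n! / (√(2n) (n / e)^n)` is antitone, with value `e / √2` at `1`.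
theorem log_factorial_le_stirling {n : ℕ} (hn : n ≠ 0) :
    log n.factorial ≤ n * log n - n + log n / 2 + 1 := by
  obtain ⟨m, rfl⟩ := Nat.exists_eq_succ_of_ne_zero hn
  have hseq : log (Stirling.stirlingSeq (m + 1)) ≤ log (Stirling.stirlingSeq 1) :=
    Stirling.log_stirlingSeq'_antitone (Nat.zero_le m)
  rw [Stirling.log_stirlingSeq_formula, Stirling.stirlingSeq_one,
    log_div (exp_ne_zero 1) (by positivity), log_exp, log_sqrt zero_le_two,
    log_mul two_ne_zero (by positivity), log_div (by positivity) (exp_ne_zero 1), log_exp] at hseq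
  linarith

theorem exp_weylRate_le_sqrt_mul_pow {r : ℝ} (hr : 0 < r) {j n : ℕ} (hj : j ≠ 0) (hjn : j ≤ n) :
    exp (n * weylRate r (j / n) - (log n + 1)) ≤ √((n : ℝ) ^ j / j.factorial) * r ^ j := by
  have hj₀ : (0 : ℝ) < j := by exact_mod_cast Nat.pos_of_ne_zero hj
  have hn₀ : (0 : ℝ) < n := hj₀.trans_le (by exact_mod_cast hjn)
  have hlog_j : 0 ≤ log j := log_nonneg (by exact_mod_cast Nat.one_le_iff_ne_zero.mpr hj)
  have hlog_jn : log j ≤ log n := log_le_log hj₀ (by exact_mod_cast hjn)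
  have hrate : n * weylRate r (j / n) = j * (1 - log j + log n) / 2 + j * log r := by
    unfold weylRate
    rw [log_div hj₀.ne' hn₀.ne']
    field_simp
    ring
  have hfact := log_factorial_le_stirling hj
  rw [← exp_log (by positivity : 0 < √((n : ℝ) ^ j / j.factorial) * r ^ j), exp_le_exp,
    log_mul (by positivity) (by positivity), log_sqrt (by positivity),
    log_div (by positivity) (by positivity), log_pow, log_pow, hrate]
  linarith

theorem exists_Icc_forall_lt_of_continuousAt {f : ℝ → ℝ} {T c : ℝ} (hT : 0 < T)
    (hf : ContinuousAt f T) (hc : c < f T) :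
    ∃ a, 0 < a ∧ a < T ∧ ∀ t ∈ Set.Icc a T, c < f t := by
  obtain ⟨l, hlT, hl⟩ := exists_Ioc_subset_of_mem_nhds (hf.eventually (lt_mem_nhds hc))
    ⟨0, hT⟩
  refine ⟨(max l 0 + T) / 2, by positivity, by linarith [max_lt hlT hT],
    fun t ht => hl ⟨?_, ht.2⟩⟩
  linarith [le_max_left l 0, ht.1]

theorem sub_mul_sub_one_le_card_filter {a b : ℝ} (ha : 0 ≤ a) (hb₀ : 0 ≤ b) (hb : b ≤ 1)
    (n : ℕ) :
    (b - a) * n - 1 ≤ #((range (n + 1)).filter fun j : ℕ => a * n ≤ j ∧ j ≤ b * n) := by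
  have hsub :
      Icc ⌈a * n⌉₊ ⌊b * n⌋₊ ⊆ (range (n + 1)).filter fun j : ℕ => a * n ≤ j ∧ j ≤ b * n := by
    intro j hj
    obtain ⟨hja, hjb⟩ := mem_Icc.mp hj
    have hjb' : (j : ℝ) ≤ b * n := (Nat.le_floor_iff (by positivity)).mp hjb
    have hjn : (j : ℝ) ≤ n := hjb'.trans (mul_le_of_le_one_left n.cast_nonneg hb)
    exact mem_filter.mpr ⟨mem_range.mpr (Nat.lt_succ_of_le (by exact_mod_cast hjn)),
      Nat.ceil_le.mp hja, hjb'⟩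
  have hcard : (⌊b * n⌋₊ + 1 : ℝ) ≤ #(Icc ⌈a * n⌉₊ ⌊b * n⌋₊) + ⌈a * n⌉₊ := by
    rw [Nat.card_Icc]
    exact_mod_cast le_tsub_add
  have hfloor := Nat.lt_floor_add_one (b * n)
  have hceil := Nat.ceil_lt_add_one (by positivity : 0 ≤ a * n)
  have hmono := Nat.cast_le (α := ℝ) |>.mpr (card_le_card hsub)
  linarith

theorem eventually_log_add_le_mul {c : ℝ} (hc : 0 < c) (b : ℝ) :
    ∀ᶠ x : ℝ in atTop, log x + b ≤ c * x := by
  filter_upwards [isLittleO_log_id_atTop.bound (half_pos hc),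
    eventually_ge_atTop (2 * b / c), eventually_ge_atTop 0] with x hlog hb hx
  rw [norm_eq_abs, norm_eq_abs, id, abs_of_nonneg hx] at hlog
  have : b ≤ c / 2 * x := by
    rw [div_le_iff₀ hc] at hb
    linarith
  linarith [le_abs_self (log x)]

/-- The one-dimensional Weyl instance of Lemma 3.1: for every `ε > 0` and `z ≠ 0`,
for all large `n` at least `δn` of the indices `0 ≤ j ≤ n` satisfy
`(n^j/j!)^{1/2} |z|^j > e^{n(V(z)-ε)}`. -/
theorem stmt_15 :
    ∀ ε > (0 : ℝ), ∀ z : ℂ, z ≠ 0 →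
      ∃ δ > (0 : ℝ), ∃ N : ℕ, ∀ n ≥ N,
        δ * (n : ℝ) ≤
          ((((Finset.range (n + 1)).filter (fun j =>
              Real.exp (n * (weylV z - ε)) <
                Real.sqrt ((n : ℝ) ^ j / j.factorial) * ‖z‖ ^ j)).card : ℕ) :
            ℝ) := by
  intro ε hε z hz
  have hr : 0 < ‖z‖ := norm_pos_iff.mpr hz
  set T := min (‖z‖ ^ 2) 1
  have hT : 0 < T := lt_min (by positivity) one_pos
  obtain ⟨a, ha, haT, hrate⟩ := exists_Icc_forall_lt_of_continuousAt
    (c := weylV z - ε / 2) hT (continuousAt_weylRate ‖z‖ hT.ne')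
    (by rw [weylRate_min_sq_one hz]; linarith)
  obtain ⟨N, hN⟩ := eventually_atTop.mp <| tendsto_natCast_atTop_atTop.eventually <|
    (eventually_log_add_le_mul (half_pos hε) 1).and
      (eventually_ge_atTop (2 / (T - a)))
  refine ⟨(T - a) / 2, by linarith, N, fun n hn => ?_⟩
  obtain ⟨hlog, hn_large⟩ := hN n hn
  have hn₀ : (0 : ℝ) < n := (by positivity : (0 : ℝ) < 2 / (T - a)).trans_le hn_large
  have hTa : 2 ≤ (T - a) * n := by rwa [div_le_iff₀' (by linarith)] at hn_large
  calc (T - a) / 2 * n ≤ (T - a) * n - 1 := by linarith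
    _ ≤ #((range (n + 1)).filter fun j : ℕ => a * n ≤ j ∧ j ≤ T * n) :=
      sub_mul_sub_one_le_card_filter ha.le hT.le (min_le_right _ _) n
    _ ≤ _ := by
      refine Nat.cast_le.mpr (card_le_card (monotone_filter_right _ fun j _ hj => ?_))
      have hj₀ : 0 < j := by exact_mod_cast (mul_pos ha hn₀).trans_le hj.1
      have hjn : j ≤ n := by
        exact_mod_cast hj.2.trans (mul_le_of_le_one_left hn₀.le (min_le_right _ _))
      refine lt_of_lt_of_le ?_ (exp_weylRate_le_sqrt_mul_pow hr hj₀.ne' hjn)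
      have hgood := hrate (j / n) ⟨(le_div_iff₀ hn₀).mpr hj.1, (div_le_iff₀ hn₀).mpr hj.2⟩
      rw [exp_lt_exp]
      linarith [mul_lt_mul_of_pos_left hgood hn₀]
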